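/- Let μ be a stable matching and μ' a 1-envy-free matching in a many-to-one market with strict responsive preferences, with corresponding one-to-one matchings μ̄ and μ̄' in the related market. If for some college j and some position c of j we have μ̄_M(c) ≻_j μ̄'_M(c), then μ̄_M(c') ⪰_j μ̄'_M(c') for every position c' of college j. -/

import Mathlib

attribute [local instance] Classical.propDecidable

noncomputable section

/-- A many-to-one college admissions market (college admissions model) with `n`
students and `m` colleges.  Strict preferences are encoded by injective rank
functions (a smaller rank means more preferred); `none` is the outside option
`0` (being unmatched / an unfilled position). -/
structure Market (n m : ℕ) where
  quota : Fin m → ℕ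
  sRank : Fin n → Option (Fin m) → ℕ
  sRank_inj : ∀ i, Function.Injective (sRank i)
  cRank : Fin m → Option (Fin n) → ℕ
  cRank_inj : ∀ j, Function.Injective (cRank j)

namespace Market

variable {n m : ℕ}

/-- Student `i` strictly prefers `a` to `b`. -/
def sPref (M : Market n m) (i : Fin n) (a b : Option (Fin m)) : Prop :=
  M.sRank i a < M.sRank i b

/-- College `j` strictly prefers `a` to `b`. -/
def cPref (M : Market n m) (j : Fin m) (a b : Option (Fin n)) : Prop :=
  M.cRank j a < M.cRank j b

/-- The set `μ⁻¹(j)` of students matched to college `j` under `μ`. -/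
def assigned (M : Market n m) (μ : Fin n → Option (Fin m)) (j : Fin m) : Finset (Fin n) :=
  Finset.univ.filter fun i => μ i = some j

/-- `μ` is a (capacity-feasible) matching: `|μ⁻¹(j)| ≤ q_j` for every college. -/
def IsMatching (M : Market n m) (μ : Fin n → Option (Fin m)) : Prop :=
  ∀ j, (M.assigned μ j).card ≤ M.quota j

/-- Individual rationality of `μ`. -/
def IndRational (M : Market n m) (μ : Fin n → Option (Fin m)) : Prop :=
  (∀ i, ¬ M.sPref i none (μ i)) ∧
  (∀ j i', μ i' = some j → ¬ M.cPref j none (some i'))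

/-- `(i, j)` is a blocking pair for `μ`. -/
def Blocks (M : Market n m) (μ : Fin n → Option (Fin m)) (i : Fin n) (j : Fin m) : Prop :=
  M.sPref i (some j) (μ i) ∧
  (((M.assigned μ j).card < M.quota j ∧ M.cPref j (some i) none) ∨
   ((M.assigned μ j).card = M.quota j ∧ ∃ i' ∈ M.assigned μ j, M.cPref j (some i) (some i')))

/-- `μ` is stable: individually rational with no blocking pair. -/
def Stable (M : Market n m) (μ : Fin n → Option (Fin m)) : Prop :=
  M.IndRational μ ∧ ∀ i j, ¬ M.Blocks μ i j

/-- `μ` is envy-free: individually rational and any blocking pair involves an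
unmatched student. -/
def EnvyFree (M : Market n m) (μ : Fin n → Option (Fin m)) : Prop :=
  M.IndRational μ ∧ ∀ i j, M.Blocks μ i j → μ i = none

/-- `μ` is 1-envy-free: envy-free, and either stable or there is one and only
one student who belongs to every blocking pair. -/
def OneEnvyFree (M : Market n m) (μ : Fin n → Option (Fin m)) : Prop :=
  M.EnvyFree μ ∧ (M.Stable μ ∨ ∃! i : Fin n, ∀ i' j, M.Blocks μ i' j → i' = i)

/-- `(i, j)` is a student-maximal blocking pair: `j` is `i`'s most preferred
college among those with whom `i` forms a blocking pair. -/
def StudentMaxBlock (M : Market n m) (μ : Fin n → Option (Fin m)) (i : Fin n) (j : Fin m) :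
    Prop :=
  M.Blocks μ i j ∧ ∀ j', M.Blocks μ i j' → M.sRank i (some j) ≤ M.sRank i (some j')

/-- `T` is the re-stabilization operator: on a 1-envy-free matching with no
blocking pair it is the identity; otherwise it satisfies the unique
student-maximal blocking pair `(i, j)`, matching `i` to `j`, keeping everyone
not matched to `j` unchanged, keeping the students of `j` if `j` has a vacancy
or if they are not `j`'s worst current student, and unmatching `j`'s worst
current student otherwise. -/
def IsTStep (M : Market n m) (T : (Fin n → Option (Fin m)) → Fin n → Option (Fin m)) : Prop :=
  ∀ μ, M.IsMatching μ → M.OneEnvyFree μ →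
    ((∀ i j, ¬ M.Blocks μ i j) → T μ = μ) ∧
    ∀ i j, M.StudentMaxBlock μ i j →
      T μ i = some j ∧
      ∀ i', i' ≠ i →
        (μ i' ≠ some j → T μ i' = μ i') ∧
        (μ i' = some j →
          ((M.assigned μ j).card < M.quota j → T μ i' = μ i') ∧
          ((M.assigned μ j).card = M.quota j →
            ((∃ i'' ∈ M.assigned μ j, M.cPref j (some i') (some i'')) → T μ i' = μ i') ∧
            ((∀ i'' ∈ M.assigned μ j, i'' ≠ i' → M.cPref j (some i'') (some i')) →
              T μ i' = none)))

/-- `Tstar` iterates `T` finitely many times from any 1-envy-free matching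
until a fixed point of `T` is reached. -/
def IsTStarOf (M : Market n m) (T Tstar : (Fin n → Option (Fin m)) → Fin n → Option (Fin m)) :
    Prop :=
  ∀ μ, M.IsMatching μ → M.OneEnvyFree μ →
    ∃ r : ℕ, Tstar μ = T^[r] μ ∧ T (Tstar μ) = Tstar μ

/-- A one-step responsive improvement for college `j`: `A` is obtained from `B`
either by filling a vacancy with an acceptable student, or by swapping a
student of `B` for a strictly preferred outside student. -/
def SwapImproves (M : Market n m) (j : Fin m) (A B : Finset (Fin n)) : Prop :=
  (∃ i₁, i₁ ∉ B ∧ A = insert i₁ B ∧ M.cPref j (some i₁) none) ∨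
  (∃ i₁ i₂, i₂ ∈ B ∧ i₁ ∉ B ∧ A = insert i₁ (B.erase i₂) ∧ M.cPref j (some i₁) (some i₂))

/-- The responsive extension of college `j`'s strict preference to sets of
students: the transitive closure of one-step responsive improvements. -/
def SetPref (M : Market n m) (j : Fin m) (A B : Finset (Fin n)) : Prop :=
  Relation.TransGen (M.SwapImproves j) A B

/-- `μ₁ ≿ μ₂`: every college either gets the same set of students or a
strictly (responsively) preferred set. -/
def CollegesWeakPref (M : Market n m) (μ₁ μ₂ : Fin n → Option (Fin m)) : Prop :=
  ∀ j, M.assigned μ₁ j = M.assigned μ₂ j ∨ M.SetPref j (M.assigned μ₁ j) (M.assigned μ₂ j)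

/-- `μ` is the student-optimal stable matching: a stable matching that every
student weakly prefers to any other stable matching. -/
def IsSOSM (M : Market n m) (μ : Fin n → Option (Fin m)) : Prop :=
  M.IsMatching μ ∧ M.Stable μ ∧
    ∀ μ', M.IsMatching μ' → M.Stable μ' → ∀ i, M.sRank i (μ i) ≤ M.sRank i (μ' i)

/-- `μ` (with student `i` unmatched) is a stable matching of the market in
which student `i` has been removed. -/
def StableAway (M : Market n m) (i : Fin n) (μ : Fin n → Option (Fin m)) : Prop :=
  μ i = none ∧
  (∀ i', i' ≠ i → ¬ M.sPref i' none (μ i')) ∧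
  (∀ j i', i' ≠ i → μ i' = some j → ¬ M.cPref j none (some i')) ∧
  (∀ i' j, i' ≠ i → ¬ M.Blocks μ i' j)

/-- `μ` (with student `i` unmatched) is the student-optimal stable matching of
the market in which student `i` has been removed. -/
def IsSOSMAway (M : Market n m) (i : Fin n) (μ : Fin n → Option (Fin m)) : Prop :=
  M.IsMatching μ ∧ M.StableAway i μ ∧
    ∀ μ', M.IsMatching μ' → M.StableAway i μ' →
      ∀ i', i' ≠ i → M.sRank i' (μ i') ≤ M.sRank i' (μ' i')

/-- The maximum rank difference `h(w)` among the colleges' preferences: the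
largest rank gap `|w_j(i₁) − w_j(i₂)|` over colleges `j` and pairs `(i₁, i₂)`
on whose relative ranking at least two colleges disagree (`0` if there is no
disagreement). -/
def maxRankDiff (M : Market n m) : ℕ :=
  Finset.univ.sup fun j : Fin m =>
    (Finset.univ.filter fun q : Option (Fin n) × Option (Fin n) =>
        ∃ j₁ j₂ : Fin m, M.cPref j₁ q.1 q.2 ∧ M.cPref j₂ q.2 q.1).sup
      fun q => ((M.cRank j q.1 : ℤ) - (M.cRank j q.2 : ℤ)).natAbs

/-- `N*_{j,1}(μ) = μ⁻¹(j) \ μ*⁻¹(j)` : students of `j` under `μ` but not `μs`. -/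
def Nset1 (M : Market n m) (μ μs : Fin n → Option (Fin m)) (j : Fin m) : Finset (Fin n) :=
  M.assigned μ j \ M.assigned μs j

/-- `N*_{j,0}(μ) = μ*⁻¹(j) \ μ⁻¹(j)` : students of `j` under `μs` but not `μ`. -/
def Nset0 (M : Market n m) (μ μs : Fin n → Option (Fin m)) (j : Fin m) : Finset (Fin n) :=
  M.assigned μs j \ M.assigned μ j

/-- The rank `r_{j,i}(A)` of student `i` within the set `A` according to `≻_j`. -/
def rankIn (M : Market n m) (j : Fin m) (i : Fin n) (A : Finset (Fin n)) : ℕ :=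
  (A.filter fun i' => M.cPref j (some i') (some i)).card + 1

/-- `a ▷_j b`: student `a` displaces student `b` from college `j` (as we move
from the SOSM `μs` to the stable matching `μ`). -/
def Displaces (M : Market n m) (μ μs : Fin n → Option (Fin m)) (j : Fin m) (a b : Fin n) :
    Prop :=
  a ∈ M.Nset1 μ μs j ∧ b ∈ M.Nset0 μ μs j ∧
    M.rankIn j a (M.Nset1 μ μs j) = M.rankIn j b (M.Nset0 μ μs j)

/-- `a ▷ b`: `a` displaces `b` from some college. -/
def DisplacesAny (M : Market n m) (μ μs : Fin n → Option (Fin m)) (a b : Fin n) : Prop :=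
  ∃ j, M.Displaces μ μs j a b

/-- The positions of the related one-to-one market: college `j` is split into
`q_j` ordered positions. -/
abbrev Position (M : Market n m) : Type := (j : Fin m) × Fin (M.quota j)

/-- Student `i`'s strict preference over positions in the related one-to-one
market: positions of strictly better colleges are better, and within a college
a smaller index is better. -/
def PosBetter (M : Market n m) (i : Fin n) :
    Option (Position M) → Option (Position M) → Prop
  | some q, some q' =>
      M.sRank i (some q.1) < M.sRank i (some q'.1) ∨ (q.1 = q'.1 ∧ (q.2 : ℕ) < (q'.2 : ℕ))
  | some q, none => M.sRank i (some q.1) < M.sRank i none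
  | none, some q' => M.sRank i none < M.sRank i (some q'.1)
  | none, none => False

/-- `(μN, μM)` is the one-to-one matching of the related market corresponding
to the many-to-one matching `μ`: the students of `μ⁻¹(j)` occupy, in the order
of college `j`'s preference, the ordered positions of `j`. -/
def Corresponds (M : Market n m) (μ : Fin n → Option (Fin m))
    (μN : Fin n → Option (Position M)) (μM : Position M → Option (Fin n)) : Prop :=
  (∀ i p, μN i = some p ↔ μM p = some i) ∧
  (∀ i j, (∃ s, μN i = some ⟨j, s⟩) ↔ μ i = some j) ∧
  (∀ i j (s : Fin (M.quota j)), μN i = some ⟨j, s⟩ →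
    (s : ℕ) = ((M.assigned μ j).filter fun i' => M.cPref j (some i') (some i)).card)

/-- `(i, p)` is a blocking pair in the related one-to-one market. -/
def PosBlocks (M : Market n m) (μN : Fin n → Option (Position M))
    (μM : Position M → Option (Fin n)) (i : Fin n) (p : Position M) : Prop :=
  M.PosBetter i (some p) (μN i) ∧ M.cPref p.1 (some i) (μM p)

/-- Individual rationality in the related one-to-one market. -/
def PosIR (M : Market n m) (μN : Fin n → Option (Position M))
    (μM : Position M → Option (Fin n)) : Prop :=
  (∀ i, ¬ M.PosBetter i none (μN i)) ∧ (∀ p : Position M, ¬ M.cPref p.1 none (μM p))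

/-- Stability in the related one-to-one market. -/
def PosStable (M : Market n m) (μN : Fin n → Option (Position M))
    (μM : Position M → Option (Fin n)) : Prop :=
  M.PosIR μN μM ∧ ∀ i p, ¬ M.PosBlocks μN μM i p

/-- Simplicity in the related one-to-one market: individually rational and any
blocking pair involves an unmatched student. -/
def PosSimple (M : Market n m) (μN : Fin n → Option (Position M))
    (μM : Position M → Option (Fin n)) : Prop :=
  M.PosIR μN μM ∧ ∀ i p, M.PosBlocks μN μM i p → μN i = none

/-- 1-simplicity in the related one-to-one market: simple, and either stable or
there is one and only one student belonging to every blocking pair. -/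
def PosOneSimple (M : Market n m) (μN : Fin n → Option (Position M))
    (μM : Position M → Option (Fin n)) : Prop :=
  M.PosSimple μN μM ∧
    (M.PosStable μN μM ∨ ∃! i : Fin n, ∀ i' p, M.PosBlocks μN μM i' p → i' = i)

end Market

/-- A generic one-to-one matching market with `n` students and `p` positions,
with strict preferences encoded by injective rank functions. -/
structure OOMarket (n p : ℕ) where
  sRank : Fin n → Option (Fin p) → ℕ
  sRank_inj : ∀ i, Function.Injective (sRank i)
  pRank : Fin p → Option (Fin n) → ℕ
  pRank_inj : ∀ c, Function.Injective (pRank c)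

namespace OOMarket

variable {n p : ℕ}

/-- `(μN, μM)` is a one-to-one matching. -/
def IsOOMatching (O : OOMarket n p) (μN : Fin n → Option (Fin p))
    (μM : Fin p → Option (Fin n)) : Prop :=
  ∀ i c, μN i = some c ↔ μM c = some i

/-- `(i, c)` is a blocking pair for `(μN, μM)`. -/
def OOBlocks (O : OOMarket n p) (μN : Fin n → Option (Fin p))
    (μM : Fin p → Option (Fin n)) (i : Fin n) (c : Fin p) : Prop :=
  O.sRank i (some c) < O.sRank i (μN i) ∧ O.pRank c (some i) < O.pRank c (μM c)

/-- Individual rationality. -/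
def OOIR (O : OOMarket n p) (μN : Fin n → Option (Fin p))
    (μM : Fin p → Option (Fin n)) : Prop :=
  (∀ i, ¬ O.sRank i none < O.sRank i (μN i)) ∧ (∀ c, ¬ O.pRank c none < O.pRank c (μM c))

/-- Stability. -/
def OOStable (O : OOMarket n p) (μN : Fin n → Option (Fin p))
    (μM : Fin p → Option (Fin n)) : Prop :=
  O.OOIR μN μM ∧ ∀ i c, ¬ O.OOBlocks μN μM i c

/-- Simplicity: individually rational and every blocking pair involves an
unmatched student. -/
def OOSimple (O : OOMarket n p) (μN : Fin n → Option (Fin p))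
    (μM : Fin p → Option (Fin n)) : Prop :=
  O.OOIR μN μM ∧ ∀ i c, O.OOBlocks μN μM i c → μN i = none

/-- 1-simplicity: simple, and either stable or there is one and only one
student belonging to every blocking pair. -/
def OOOneSimple (O : OOMarket n p) (μN : Fin n → Option (Fin p))
    (μM : Fin p → Option (Fin n)) : Prop :=
  O.OOSimple μN μM ∧
    (O.OOStable μN μM ∨ ∃! i : Fin n, ∀ i' c, O.OOBlocks μN μM i' c → i' = i)

end OOMarket

end


/-!
Call a college `k` *upgraded* (from `μ` to `μ'`) if it is full under `μ'` and ranks all of its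
`μ'`-students above some student it has under `μ`. Stability of `μ` and envy-freeness of `μ'`
show that a student placed by `μ'` in an upgraded college is placed by `μ` in an upgraded
college; as upgraded colleges are full under `μ'`, counting seats turns this inclusion into an
equality, so the converse holds as well.

If position `c'` of `j` were better filled under `μ̄'` and position `c` better filled under `μ̄`,
the first would produce a `μ'`-student of `j` whom `j` would admit under `μ`; stability places
that student under `μ` in an upgraded college, so by the converse `j` itself is upgraded. The
second produces a `μ`-student `i₀` of `j` whom `j` would admit under `μ'`; by the converse `i₀`
sits under `μ'` in another upgraded college `k`, which would admit `i₀` under `μ`, so stability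
of `μ` makes `i₀` prefer `j` to `k`, and `(i₀, j)` blocks `μ'` although `i₀` is matched.
-/

namespace Market

variable {n m : ℕ} {M : Market n m} {μ μ' μ₁ μ₂ : Fin n → Option (Fin m)}

@[simp]
lemma mem_assigned {j : Fin m} {i : Fin n} : i ∈ M.assigned μ j ↔ μ i = some j := by
  simp [assigned]

lemma sPref_of_not_sPref {i : Fin n} {a b : Option (Fin m)} (hne : a ≠ b)
    (h : ¬ M.sPref i b a) : M.sPref i a b :=
  lt_of_le_of_ne (not_lt.mp h) fun e => hne (M.sRank_inj i e)

lemma cPref_of_not_cPref {j : Fin m} {a b : Option (Fin n)} (hne : a ≠ b)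
    (h : ¬ M.cPref j b a) : M.cPref j a b :=
  lt_of_le_of_ne (not_lt.mp h) fun e => hne (M.cRank_inj j e)

lemma IndRational.cPref_none (hIR : M.IndRational μ) {j : Fin m} {i : Fin n}
    (hi : μ i = some j) : M.cPref j (some i) none :=
  cPref_of_not_cPref (by simp) (hIR.2 j i hi)

/-- The college side of a blocking pair `(i, j)` of `μ`. -/
def WouldAdmit (M : Market n m) (μ : Fin n → Option (Fin m)) (j : Fin m) (i : Fin n) : Prop :=
  ((M.assigned μ j).card < M.quota j ∧ M.cPref j (some i) none) ∨
    ((M.assigned μ j).card = M.quota j ∧ ∃ i' ∈ M.assigned μ j, M.cPref j (some i) (some i'))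

lemma Stable.sPref_of_wouldAdmit (hst : M.Stable μ) {i : Fin n} {j : Fin m}
    (hne : μ i ≠ some j) (h : M.WouldAdmit μ j i) : M.sPref i (μ i) (some j) :=
  sPref_of_not_sPref hne fun hp => hst.2 i j ⟨hp, h⟩

lemma EnvyFree.not_wouldAdmit (hef : M.EnvyFree μ) {i : Fin n} {j : Fin m} (hi : μ i ≠ none)
    (hp : M.sPref i (some j) (μ i)) : ¬ M.WouldAdmit μ j i :=
  fun h => hi (hef.2 i j ⟨hp, h⟩)

lemma IsMatching.full_and_cPref_of_not_wouldAdmit (hμ : M.IsMatching μ) {i : Fin n} {j : Fin m}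
    (hacc : M.cPref j (some i) none) (hi : μ i ≠ some j) (h : ¬ M.WouldAdmit μ j i) :
    (M.assigned μ j).card = M.quota j ∧ ∀ y ∈ M.assigned μ j, M.cPref j (some y) (some i) := by
  have hfull : (M.assigned μ j).card = M.quota j :=
    (hμ j).eq_or_lt.resolve_right fun hlt => h (Or.inl ⟨hlt, hacc⟩)
  refine ⟨hfull, fun y hy => cPref_of_not_cPref ?_ fun hiy => h (Or.inr ⟨hfull, y, hy, hiy⟩)⟩
  rintro ⟨⟩
  exact hi (mem_assigned.mp hy)

/-- Under `Corresponds`, a student `i` of `j` occupies the position of `j` indexed by the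
cardinality of `M.betterIn j (M.assigned μ j) i`. -/
noncomputable def betterIn (M : Market n m) (j : Fin m) (A : Finset (Fin n)) (i : Fin n) :
    Finset (Fin n) :=
  A.filter fun x => M.cPref j (some x) (some i)

lemma mem_betterIn {j : Fin m} {A : Finset (Fin n)} {i x : Fin n} :
    x ∈ M.betterIn j A i ↔ x ∈ A ∧ M.cPref j (some x) (some i) :=
  Finset.mem_filter

lemma notMem_betterIn_self {j : Fin m} {A : Finset (Fin n)} {i : Fin n} :
    i ∉ M.betterIn j A i :=
  fun h => lt_irrefl _ (mem_betterIn.mp h).2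

lemma card_betterIn_lt {j : Fin m} {A : Finset (Fin n)} {a b : Fin n} (ha : a ∈ A)
    (h : M.cPref j (some a) (some b)) : (M.betterIn j A a).card < (M.betterIn j A b).card := by
  refine Finset.card_lt_card ((Finset.ssubset_iff_of_subset ?_).mpr ⟨a, ?_, ?_⟩)
  · intro x hx
    exact mem_betterIn.mpr ⟨(mem_betterIn.mp hx).1, (mem_betterIn.mp hx).2.trans h⟩
  · exact mem_betterIn.mpr ⟨ha, h⟩
  · exact notMem_betterIn_self

lemma exists_card_betterIn_eq (j : Fin m) {A : Finset (Fin n)} {s : ℕ} (hs : s < A.card) :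
    ∃ i ∈ A, (M.betterIn j A i).card = s := by
  have hmaps : Set.MapsTo (fun i => (M.betterIn j A i).card) A (Finset.range A.card) :=
    fun i hi => Finset.mem_range.mpr <| Finset.card_lt_card <|
      (Finset.ssubset_iff_of_subset (Finset.filter_subset _ _)).mpr ⟨i, hi, notMem_betterIn_self⟩
  have hinj : Set.InjOn (fun i => (M.betterIn j A i).card) A := by
    intro a ha b hb hab
    by_contra hne
    rcases lt_or_gt_of_ne fun e => hne (Option.some_injective _ (M.cRank_inj j e)) with h | h
    · exact (card_betterIn_lt ha h).ne hab
    · exact (card_betterIn_lt hb h).ne hab.symm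
  obtain ⟨i, hi, hcard⟩ := Finset.surjOn_of_injOn_of_card_le _ hmaps hinj
    (by rw [Finset.card_range]) (Finset.mem_coe.mpr (Finset.mem_range.mpr hs))
  exact ⟨i, hi, hcard⟩

section Corresponds

variable {μN : Fin n → Option M.Position} {μM : M.Position → Option (Fin n)}

lemma Corresponds.occupant (hc : M.Corresponds μ μN μM) {j : Fin m} {s : Fin (M.quota j)}
    {a : Fin n} (h : μM ⟨j, s⟩ = some a) :
    μ a = some j ∧ (M.betterIn j (M.assigned μ j) a).card = s := by
  have hN : μN a = some ⟨j, s⟩ := (hc.1 a _).mpr h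
  exact ⟨(hc.2.1 a j).mp ⟨s, hN⟩, (hc.2.2 a j s hN).symm⟩

lemma Corresponds.exists_occupant (hc : M.Corresponds μ μN μM) {j : Fin m}
    {s : Fin (M.quota j)} (hs : (s : ℕ) < (M.assigned μ j).card) : ∃ a, μM ⟨j, s⟩ = some a := by
  obtain ⟨i, hi, hcount⟩ := exists_card_betterIn_eq j hs
  obtain ⟨s', hs'⟩ := (hc.2.1 i j).mpr (mem_assigned.mp hi)
  obtain rfl : s' = s := Fin.ext ((hc.2.2 i j s' hs').trans hcount)
  exact ⟨i, (hc.1 i _).mp hs'⟩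

variable {μN₁ μN₂ : Fin n → Option M.Position} {μM₁ μM₂ : M.Position → Option (Fin n)}

/-- If not, `μ₁` would hold the `s + 1` students of `μ₂` ranked by `j` at least as high as `b`,
so its occupant of position `s` would be at least as good as `b`. -/
lemma Corresponds.exists_new_student (hc₁ : M.Corresponds μ₁ μN₁ μM₁)
    (hc₂ : M.Corresponds μ₂ μN₂ μM₂) {j : Fin m} {s : Fin (M.quota j)} {b : Fin n}
    (hb : μM₂ ⟨j, s⟩ = some b) (hlt : M.cPref j (some b) (μM₁ ⟨j, s⟩)) :
    ∃ i, μ₂ i = some j ∧ μ₁ i ≠ some j ∧ M.cRank j (some i) ≤ M.cRank j (some b) := by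
  obtain ⟨hμ₂b, hcount⟩ := hc₂.occupant hb
  set S := insert b (M.betterIn j (M.assigned μ₂ j) b)
  by_contra! hnew
  have hS : ∀ x ∈ S, μ₁ x = some j ∧ M.cRank j (some x) ≤ M.cRank j (some b) := by
    intro x hx
    obtain rfl | hx := Finset.mem_insert.mp hx
    · exact ⟨not_not.mp fun h => (hnew x hμ₂b h).false, le_rfl⟩
    · obtain ⟨hx₁, hx₂⟩ := mem_betterIn.mp hx
      exact ⟨not_not.mp fun h => (hnew x (mem_assigned.mp hx₁) h).not_ge hx₂.le, hx₂.le⟩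
  have hcardS : S.card = s + 1 := by
    rw [Finset.card_insert_of_notMem notMem_betterIn_self, hcount]
  obtain ⟨a, ha⟩ := hc₁.exists_occupant (s := s) <| calc
    (s : ℕ) < S.card := hcardS ▸ Nat.lt_succ_self s
    _ ≤ (M.assigned μ₁ j).card := Finset.card_le_card fun x hx => mem_assigned.mpr (hS x hx).1
  rw [ha] at hlt
  have hsub : S ⊆ M.betterIn j (M.assigned μ₁ j) a := fun x hx =>
    mem_betterIn.mpr ⟨mem_assigned.mpr (hS x hx).1, (hS x hx).2.trans_lt hlt⟩
  have := Finset.card_le_card hsub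
  rw [hcardS, (hc₁.occupant ha).2] at this
  omega

lemma Corresponds.exists_wouldAdmit (hc₁ : M.Corresponds μ₁ μN₁ μM₁)
    (hc₂ : M.Corresponds μ₂ μN₂ μM₂) (hμ₁ : M.IsMatching μ₁) (hIR₁ : M.IndRational μ₁)
    (hIR₂ : M.IndRational μ₂) {j : Fin m} {s : Fin (M.quota j)}
    (hlt : M.cPref j (μM₂ ⟨j, s⟩) (μM₁ ⟨j, s⟩)) :
    ∃ i, μ₂ i = some j ∧ μ₁ i ≠ some j ∧ M.WouldAdmit μ₁ j i := by
  obtain ⟨b, hb⟩ : ∃ b, μM₂ ⟨j, s⟩ = some b := by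
    refine Option.ne_none_iff_exists'.mp fun hnone => ?_
    rw [hnone] at hlt
    cases ha : μM₁ ⟨j, s⟩ with
    | none => rw [ha] at hlt; exact lt_irrefl _ hlt
    | some a => rw [ha] at hlt; exact hIR₁.2 j a (hc₁.occupant ha).1 hlt
  rw [hb] at hlt
  obtain ⟨i, hi₂, hi₁, hib⟩ := hc₁.exists_new_student hc₂ hb hlt
  refine ⟨i, hi₂, hi₁, ?_⟩
  rcases (hμ₁ j).lt_or_eq with hvac | hfull
  · exact Or.inl ⟨hvac, hib.trans_lt (hIR₂.cPref_none (hc₂.occupant hb).1)⟩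
  · obtain ⟨a, ha⟩ := hc₁.exists_occupant (s := s) (by rw [hfull]; exact s.isLt)
    rw [ha] at hlt
    exact Or.inr ⟨hfull, a, mem_assigned.mpr (hc₁.occupant ha).1, hib.trans_lt hlt⟩

end Corresponds

lemma card_biUnion_assigned_le_of_full {W : Finset (Fin m)} (hμ : M.IsMatching μ)
    (hfull : ∀ k ∈ W, (M.assigned μ' k).card = M.quota k) :
    (W.biUnion (M.assigned μ)).card ≤ (W.biUnion (M.assigned μ')).card := by
  calc (W.biUnion (M.assigned μ)).card
      ≤ ∑ k ∈ W, (M.assigned μ k).card := Finset.card_biUnion_le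
    _ ≤ ∑ k ∈ W, (M.assigned μ' k).card :=
      Finset.sum_le_sum fun k hk => (hμ k).trans (hfull k hk).ge
    _ = (W.biUnion (M.assigned μ')).card := by
      refine (Finset.card_biUnion fun a _ b _ hab => ?_).symm
      refine Finset.disjoint_left.mpr fun x hxa hxb => hab ?_
      exact Option.some_injective _ ((mem_assigned.mp hxa).symm.trans (mem_assigned.mp hxb))

def Upgraded (M : Market n m) (μ μ' : Fin n → Option (Fin m)) (k : Fin m) : Prop :=
  (M.assigned μ' k).card = M.quota k ∧
    ∃ v, μ v = some k ∧ ∀ y ∈ M.assigned μ' k, M.cPref k (some y) (some v)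

lemma Upgraded.wouldAdmit (hμ : M.IsMatching μ) {k : Fin m} (hk : M.Upgraded μ μ' k)
    {y : Fin n} (hy : μ' y = some k) (hacc : M.cPref k (some y) none) : M.WouldAdmit μ k y := by
  obtain ⟨-, v, hv, hbetter⟩ := hk
  rcases (hμ k).lt_or_eq with hvac | hfull
  · exact Or.inl ⟨hvac, hacc⟩
  · exact Or.inr ⟨hfull, v, mem_assigned.mpr hv, hbetter y (mem_assigned.mpr hy)⟩

lemma exists_upgraded_of_wouldAdmit (hst : M.Stable μ) (hμ' : M.IsMatching μ')
    (hef : M.EnvyFree μ') {x : Fin n} {k : Fin m} (hx' : μ' x = some k) (hx : μ x ≠ some k)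
    (hadm : M.WouldAdmit μ k x) :
    ∃ k₂, μ x = some k₂ ∧ M.sPref x (some k₂) (some k) ∧ M.Upgraded μ μ' k₂ := by
  have hpref := hst.sPref_of_wouldAdmit hx hadm
  cases hμx : μ x with
  | none => rw [hμx] at hpref; exact (hef.1.1 x (by rwa [hx'])).elim
  | some k₂ =>
    rw [hμx] at hpref
    refine ⟨k₂, rfl, hpref, ?_⟩
    have hnot := hef.not_wouldAdmit (by simp [hx']) (hx' ▸ hpref)
    obtain ⟨hfull, hbetter⟩ := hμ'.full_and_cPref_of_not_wouldAdmit
      (hst.1.cPref_none hμx) (by rw [hx']; exact fun e => hpref.ne (by rw [e])) hnot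
    exact ⟨hfull, x, hμx, hbetter⟩

lemma Upgraded.exists_upgraded_of_mem_new {k : Fin m} (hk : M.Upgraded μ μ' k)
    (hμ : M.IsMatching μ) (hst : M.Stable μ) (hμ' : M.IsMatching μ') (hef : M.EnvyFree μ')
    {x : Fin n} (hx' : μ' x = some k) : ∃ k₂, μ x = some k₂ ∧ M.Upgraded μ μ' k₂ := by
  by_cases hx : μ x = some k
  · exact ⟨k, hx, hk⟩
  · obtain ⟨k₂, hk₂, -, hup⟩ := exists_upgraded_of_wouldAdmit hst hμ' hef hx' hx
      (hk.wouldAdmit hμ hx' (hef.1.cPref_none hx'))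
    exact ⟨k₂, hk₂, hup⟩

lemma Upgraded.exists_upgraded_of_mem_old {k : Fin m} (hk : M.Upgraded μ μ' k)
    (hμ : M.IsMatching μ) (hst : M.Stable μ) (hμ' : M.IsMatching μ') (hef : M.EnvyFree μ')
    {x : Fin n} (hx : μ x = some k) : ∃ k₂, μ' x = some k₂ ∧ M.Upgraded μ μ' k₂ := by
  set W := Finset.univ.filter (M.Upgraded μ μ')
  have hsub : W.biUnion (M.assigned μ') ⊆ W.biUnion (M.assigned μ) := by
    intro y hy
    simp only [W, Finset.mem_biUnion, Finset.mem_filter, Finset.mem_univ, true_and,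
      mem_assigned] at hy ⊢
    obtain ⟨k', hk', hy'⟩ := hy
    obtain ⟨k₂, hy₂, hk₂⟩ := hk'.exists_upgraded_of_mem_new hμ hst hμ' hef hy'
    exact ⟨k₂, hk₂, hy₂⟩
  have heq := Finset.eq_of_subset_of_card_le hsub
    (card_biUnion_assigned_le_of_full hμ fun k hk => (Finset.mem_filter.mp hk).2.1)
  have hxW : x ∈ W.biUnion (M.assigned μ) := by simpa [W] using ⟨k, hk, hx⟩
  rw [← heq] at hxW
  simpa [W, and_comm] using hxW

end Market

/-- comparing the related one-to-one matchings of a stable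
matching `μ` and a 1-envy-free matching `μ'`: if some position `c` of college
`j` is filled by a strictly `j`-better student under `μ̄` than under `μ̄'`,
then every position `c'` of `j` is filled by a weakly `j`-better student under
`μ̄` than under `μ̄'`. -/
theorem positionwise_comparison {n m : ℕ} (M : Market n m)
    (μ μ' : Fin n → Option (Fin m))
    (μN : Fin n → Option (Market.Position M)) (μM : Market.Position M → Option (Fin n))
    (μN' : Fin n → Option (Market.Position M)) (μM' : Market.Position M → Option (Fin n))
    (hμ : M.IsMatching μ) (hst : M.Stable μ)
    (hμ' : M.IsMatching μ') (h1 : M.OneEnvyFree μ')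
    (hc : M.Corresponds μ μN μM) (hc' : M.Corresponds μ' μN' μM')
    (j : Fin m) (c : Fin (M.quota j))
    (h : M.cPref j (μM ⟨j, c⟩) (μM' ⟨j, c⟩)) :
    ∀ c' : Fin (M.quota j), M.cRank j (μM ⟨j, c'⟩) ≤ M.cRank j (μM' ⟨j, c'⟩) := by
  intro c'
  by_contra! hworse
  have hef := h1.1
  have hj : M.Upgraded μ μ' j := by
    obtain ⟨i₁, hi₁', hi₁, hadm⟩ := hc.exists_wouldAdmit hc' hμ hst.1 hef.1 hworse
    obtain ⟨k, hk, -, hup⟩ := Market.exists_upgraded_of_wouldAdmit hst hμ' hef hi₁' hi₁ hadm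
    obtain ⟨k', hk', hup'⟩ := hup.exists_upgraded_of_mem_old hμ hst hμ' hef hk
    exact (Option.some_injective _ (hk'.symm.trans hi₁')) ▸ hup'
  obtain ⟨i₀, hi₀, hi₀', hadm'⟩ := hc'.exists_wouldAdmit hc hμ' hef.1 hst.1 h
  obtain ⟨k, hk, hup⟩ := hj.exists_upgraded_of_mem_old hμ hst hμ' hef hi₀
  -- `k ≠ j` as `μ' i₀ ≠ some j`; stability of `μ` at `(i₀, k)` makes `i₀` prefer `j` to `k`.
  have hpref := hst.sPref_of_wouldAdmit (by rw [hi₀]; exact fun e => hi₀' (e ▸ hk))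
    (hup.wouldAdmit hμ hk (hef.1.cPref_none hk))
  rw [hi₀] at hpref
  exact hef.not_wouldAdmit (by simp [hk]) (hk ▸ hpref) hadm'
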